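/- Let Q be a prime power, n > 0 and k ≥ 0 integers, β, γ ∈ F_{Q^2} with β^{Q+1} = 1 and γ^{Q+1} ≠ 1. Then f(x) := x^{n+k(Q+1)} · ((γx^{Q-1} - β)^n - γ(x^{Q-1} - γ^Q β)^n) permutes F_{Q^2} if and only if gcd(n + 2k, Q - 1) = 1 and gcd(n, Q + 1) = 1. -/

import Mathlib

/-!
Write `f x = x ^ r * h (x ^ (Q - 1))` with `r = n + k (Q + 1)`. Since `x ↦ x ^ (Q - 1)` maps
`F^×` onto the circle `μ = {y | y ^ (Q + 1) = 1}` with the cosets of `μ_{Q-1}` as fibres, `f`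
permutes `F` iff `gcd (r, Q - 1) = 1` and `y ↦ y ^ r * h y ^ (Q - 1)` is injective on `μ`; and
`gcd (r, Q - 1) = gcd (n + 2k, Q - 1)`. On `μ` the Frobenius `x ↦ x ^ Q` is inversion, which turns
`y ^ r * h y ^ (Q - 1)` into `M ((T y) ^ n)` for the Möbius maps `T y = (y - γ^Q β) / (γ y - β)`,
a permutation of `μ`, and `M`, a multiple of `T` for `β = 1`, injective on `μ` because
`γ ^ (Q + 1) ≠ 1`. So the condition becomes injectivity of `z ↦ z ^ n` on the cyclic group `μ`
of order `Q + 1`, i.e. `gcd (n, Q + 1) = 1`.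
-/

open Set Function

theorem exists_ne_one_pow_eq_one_of_not_coprime {G : Type*} [Group G] [Finite G] {a b : ℕ}
    (hab : ¬a.Coprime b) (hb : b ∣ Nat.card G) : ∃ ζ : G, ζ ≠ 1 ∧ ζ ^ a = 1 ∧ ζ ^ b = 1 := by
  have hℓ : (a.gcd b).minFac.Prime := Nat.minFac_prime hab
  have hℓa := (Nat.minFac_dvd _).trans (Nat.gcd_dvd_left a b)
  have hℓb := (Nat.minFac_dvd _).trans (Nat.gcd_dvd_right a b)
  have := Fact.mk hℓ
  obtain ⟨ζ, hζ⟩ := exists_prime_orderOf_dvd_card' _ (hℓb.trans hb)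
  refine ⟨ζ, ?_, orderOf_dvd_iff_pow_eq_one.mp (hζ ▸ hℓa), orderOf_dvd_iff_pow_eq_one.mp (hζ ▸ hℓb)⟩
  rintro rfl
  exact hℓ.ne_one (hζ.symm.trans orderOf_one)

theorem IsCyclic.exists_pow_eq_of_pow_eq_one {G : Type*} [Group G] [IsCyclic G] [Finite G]
    {s d : ℕ} (hG : Nat.card G = s * d) {y : G} (hy : y ^ d = 1) : ∃ x : G, x ^ s = y := by
  obtain ⟨ξ, hξ⟩ := IsCyclic.exists_monoid_generator (α := G)
  obtain ⟨t, rfl⟩ := Submonoid.mem_powers_iff _ _ |>.mp (hξ y)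
  have hd : 0 < d := Nat.pos_of_mul_pos_left (hG ▸ Nat.card_pos)
  have hst : s * d ∣ t * d := by
    rw [← hG, ← orderOf_eq_card_of_forall_mem_powers hξ]
    exact orderOf_dvd_of_pow_eq_one (by rwa [pow_mul])
  obtain ⟨u, rfl⟩ := Nat.dvd_of_mul_dvd_mul_right hd hst
  exact ⟨ξ ^ u, by rw [← pow_mul, mul_comm]⟩

theorem mapsTo_pow_setOf_pow_eq_one {M : Type*} [CommMonoid M] (m n : ℕ) :
    MapsTo (· ^ n) {z : M | z ^ m = 1} {z | z ^ m = 1} :=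
  fun z (hz : z ^ m = 1) => show (z ^ n) ^ m = 1 by rw [pow_right_comm, hz, one_pow]

theorem eq_of_pow_eq_pow_of_coprime {K : Type*} [CommGroupWithZero K] {a b : K} {m n : ℕ}
    (hmn : m.Coprime n) (hm : a ^ m = b ^ m) (hn : a ^ n = b ^ n) : a = b := by
  rcases eq_or_ne b 0 with rfl | hb
  · rcases Nat.eq_zero_or_pos m with rfl | hm0
    · rw [Nat.coprime_zero_left] at hmn
      simpa [hmn] using hn
    · exact (pow_eq_zero_iff hm0.ne').mp (hm.trans (zero_pow hm0.ne'))
  · have hbm := div_self (pow_ne_zero m hb)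
    have hbn := div_self (pow_ne_zero n hb)
    rw [← div_eq_one_iff_eq hb, ← pow_eq_one_iff_of_coprime hmn, div_pow, div_pow, hm, hn]
    exact ⟨hbm, hbn⟩

namespace FiniteField

variable {F : Type*} [Field F] [Fintype F]

theorem natCard_units : Nat.card Fˣ = Fintype.card F - 1 := by
  rw [Nat.card_units, Nat.card_eq_fintype_card]

theorem pow_pow_eq_one {s d : ℕ} (hsd : s * d = Fintype.card F - 1) {x : F} (hx : x ≠ 0) :
    (x ^ s) ^ d = 1 := by
  rw [← pow_mul, hsd, pow_card_sub_one_eq_one x hx]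

theorem exists_pow_eq_of_pow_eq_one {s d : ℕ} (hsd : s * d = Fintype.card F - 1) {y : F}
    (hy : y ^ d = 1) : ∃ x : F, x ≠ 0 ∧ x ^ s = y := by
  have hd : d ≠ 0 := by
    rintro rfl
    have := Fintype.one_lt_card (α := F)
    omega
  have hy0 : y ≠ 0 := (IsUnit.of_pow_eq_one hy hd).ne_zero
  obtain ⟨x, hx⟩ := IsCyclic.exists_pow_eq_of_pow_eq_one (G := Fˣ) (natCard_units.trans hsd.symm)
    (y := Units.mk0 y hy0) (Units.ext (by simpa using hy))
  exact ⟨x, x.ne_zero, by simpa using congrArg Units.val hx⟩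

theorem injOn_pow_iff_coprime {m n : ℕ} (hm : m ∣ Fintype.card F - 1) :
    InjOn (· ^ n) {z : F | z ^ m = 1} ↔ n.Coprime m := by
  refine ⟨fun hinj => ?_, fun hnm a ha b hb hab =>
    eq_of_pow_eq_pow_of_coprime hnm hab (ha.trans hb.symm)⟩
  by_contra hnm
  obtain ⟨ζ, hζ1, hζn, hζm⟩ :=
    exists_ne_one_pow_eq_one_of_not_coprime (G := Fˣ) hnm (natCard_units (F := F) ▸ hm)
  refine hζ1 (Units.ext ?_)
  refine hinj (x₁ := (ζ : F)) ?_ (one_pow m) ?_ <;> simp [← Units.val_pow_eq_pow_val, hζn, hζm]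

variable {r s d : ℕ} {h : F → F}

theorem coprime_and_injOn_of_bijective (hr : r ≠ 0) (hsd : s * d = Fintype.card F - 1)
    (hh : ∀ y : F, y ^ d = 1 → h y ≠ 0) (hf : Bijective fun x : F => x ^ r * h (x ^ s)) :
    r.Coprime s ∧ InjOn (fun y : F => y ^ r * h y ^ s) {y | y ^ d = 1} := by
  constructor
  · by_contra hrs
    obtain ⟨ζ, hζ1, hζr, hζs⟩ := exists_ne_one_pow_eq_one_of_not_coprime (G := Fˣ) hrs
      (natCard_units (F := F) ▸ Dvd.intro d hsd)
    refine hζ1 (Units.ext (hf.injective ?_))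
    simp [← Units.val_pow_eq_pow_val, hζr, hζs]
  · have hmaps : MapsTo (fun y : F => y ^ r * h y ^ s) {y | y ^ d = 1} {y | y ^ d = 1} := by
      intro y (hy : y ^ d = 1)
      change (y ^ r * h y ^ s) ^ d = 1
      rw [mul_pow, pow_right_comm, hy, one_pow, one_mul, ← pow_mul, hsd,
        pow_card_sub_one_eq_one _ (hh y hy)]
    rw [(toFinite _).injOn_iff_bijOn_of_mapsTo hmaps,
      ← (toFinite _).surjOn_iff_bijOn_of_mapsTo hmaps]
    intro y hy
    obtain ⟨u, hu0, rfl⟩ := exists_pow_eq_of_pow_eq_one hsd hy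
    obtain ⟨x, rfl⟩ := hf.surjective u
    have hx : x ≠ 0 := by
      rintro rfl
      simp [zero_pow hr] at hu0
    exact ⟨x ^ s, pow_pow_eq_one hsd hx, by simp only [mul_pow, pow_right_comm]⟩

theorem injective_of_coprime_of_injOn (hr : r ≠ 0) (hsd : s * d = Fintype.card F - 1)
    (hh : ∀ y : F, y ^ d = 1 → h y ≠ 0) (hrs : r.Coprime s)
    (hφ : InjOn (fun y : F => y ^ r * h y ^ s) {y | y ^ d = 1}) :
    Injective fun x : F => x ^ r * h (x ^ s) := by
  have hf_eq_zero : ∀ x : F, x ^ r * h (x ^ s) = 0 ↔ x = 0 := fun x =>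
    ⟨fun hx => by_contra fun hx0 =>
      mul_ne_zero (pow_ne_zero r hx0) (hh _ (pow_pow_eq_one hsd hx0)) hx,
     fun hx => by simp [hx, zero_pow hr]⟩
  intro x₁ x₂ hx
  simp only at hx
  rcases eq_or_ne x₂ 0 with rfl | h₂
  · rw [← hf_eq_zero, hx, hf_eq_zero]
  have h₁ : x₁ ≠ 0 := fun h₁ => h₂ (by rwa [← hf_eq_zero, ← hx, hf_eq_zero])
  have hs : x₁ ^ s = x₂ ^ s := hφ (pow_pow_eq_one hsd h₁) (pow_pow_eq_one hsd h₂) <| by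
    simp only [pow_right_comm _ s r, ← mul_pow, hx]
  rw [hs] at hx
  exact eq_of_pow_eq_pow_of_coprime hrs (mul_right_cancel₀ (hh _ (pow_pow_eq_one hsd h₂)) hx) hs

theorem bijective_pow_mul_comp_pow_iff (hr : r ≠ 0) (hsd : s * d = Fintype.card F - 1)
    (hh : ∀ y : F, y ^ d = 1 → h y ≠ 0) :
    (Bijective fun x : F => x ^ r * h (x ^ s)) ↔
      r.Coprime s ∧ InjOn (fun y : F => y ^ r * h y ^ s) {y | y ^ d = 1} :=
  ⟨coprime_and_injOn_of_bijective hr hsd hh, fun ⟨hrs, hφ⟩ =>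
    Finite.injective_iff_bijective.mp (injective_of_coprime_of_injOn hr hsd hh hrs hφ)⟩

end FiniteField

def mobius {F : Type*} [Field F] (Q : ℕ) (β γ y : F) : F := (y - γ ^ Q * β) / (γ * y - β)

section Twisted

variable {F : Type*} [Field F] {Q n : ℕ} {β γ y : F}

/- On the circle `y ^ (Q + 1) = 1` (which contains `β`) the Frobenius `x ↦ x ^ Q` is inversion,
so it exchanges the two linear factors up to the unit `-β y`. -/
theorem mul_sub_pow_mul_eq_neg (hfrob : ∀ a b : F, (a - b) ^ Q = a ^ Q - b ^ Q)
    (hβ : β ^ (Q + 1) = 1) (hy : y ^ (Q + 1) = 1) :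
    (γ * y - β) ^ Q * (β * y) = -(y - γ ^ Q * β) := by
  rw [pow_succ] at hβ hy
  rw [hfrob, mul_pow]
  linear_combination (γ ^ Q * β) * hy - y * hβ

theorem sub_mul_pow_mul_eq_neg (hfrob : ∀ a b : F, (a - b) ^ Q = a ^ Q - b ^ Q)
    (hγQ : (γ ^ Q) ^ Q = γ) (hβ : β ^ (Q + 1) = 1) (hy : y ^ (Q + 1) = 1) :
    (y - γ ^ Q * β) ^ Q * (β * y) = -(γ * y - β) := by
  rw [pow_succ] at hβ hy
  rw [hfrob, mul_pow, hγQ]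
  linear_combination β * hy - γ * y * hβ

theorem mul_sub_pow_succ_eq (hfrob : ∀ a b : F, (a - b) ^ Q = a ^ Q - b ^ Q)
    (hγQ : (γ ^ Q) ^ Q = γ) (hβ : β ^ (Q + 1) = 1) (hy : y ^ (Q + 1) = 1) :
    (γ * y - β) ^ (Q + 1) = (y - γ ^ Q * β) ^ (Q + 1) := by
  have hβy : β * y ≠ 0 :=
    mul_ne_zero (IsUnit.of_pow_eq_one hβ Q.succ_ne_zero).ne_zero
      (IsUnit.of_pow_eq_one hy Q.succ_ne_zero).ne_zero
  refine mul_right_cancel₀ hβy ?_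
  rw [pow_succ', pow_succ', mul_assoc, mul_assoc, mul_sub_pow_mul_eq_neg hfrob hβ hy,
    sub_mul_pow_mul_eq_neg hfrob hγQ hβ hy]
  ring

theorem sub_pow_mul_pow_eq (hfrob : ∀ a b : F, (a - b) ^ Q = a ^ Q - b ^ Q)
    (hγQ : (γ ^ Q) ^ Q = γ) (hβ : β ^ (Q + 1) = 1) (hy : y ^ (Q + 1) = 1) :
    ((γ * y - β) ^ n - γ * (y - γ ^ Q * β) ^ n) ^ Q * (β * y) ^ n =
      (-1) ^ n * ((y - γ ^ Q * β) ^ n - γ ^ Q * (γ * y - β) ^ n) := by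
  have h₁ : ((γ * y - β) ^ Q) ^ n * (β * y) ^ n = (-1) ^ n * (y - γ ^ Q * β) ^ n := by
    rw [← mul_pow, mul_sub_pow_mul_eq_neg hfrob hβ hy, neg_pow]
  have h₂ : ((y - γ ^ Q * β) ^ Q) ^ n * (β * y) ^ n = (-1) ^ n * (γ * y - β) ^ n := by
    rw [← mul_pow, sub_mul_pow_mul_eq_neg hfrob hγQ hβ hy, neg_pow]
  rw [hfrob, mul_pow, pow_right_comm _ n Q, pow_right_comm _ n Q]
  linear_combination h₁ - γ ^ Q * h₂

theorem mul_sub_ne_zero (hγ : γ ^ (Q + 1) ≠ 1) (hβ : β ^ (Q + 1) = 1) (hy : y ^ (Q + 1) = 1) :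
    γ * y - β ≠ 0 := by
  intro h
  apply hγ
  calc γ ^ (Q + 1) = (γ * y) ^ (Q + 1) := by rw [mul_pow, hy, mul_one]
    _ = 1 := by rw [sub_eq_zero.mp h, hβ]

theorem mapsTo_mobius (hfrob : ∀ a b : F, (a - b) ^ Q = a ^ Q - b ^ Q)
    (hγQ : (γ ^ Q) ^ Q = γ) (hβ : β ^ (Q + 1) = 1) (hγ : γ ^ (Q + 1) ≠ 1) :
    MapsTo (mobius Q β γ) {y | y ^ (Q + 1) = 1} {y | y ^ (Q + 1) = 1} := by
  intro y (hy : y ^ (Q + 1) = 1)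
  change (mobius Q β γ y) ^ (Q + 1) = 1
  rw [mobius, div_pow, ← mul_sub_pow_succ_eq hfrob hγQ hβ hy,
    div_self (pow_ne_zero _ (mul_sub_ne_zero hγ hβ hy))]

theorem injOn_mobius (hβ : β ^ (Q + 1) = 1) (hγ : γ ^ (Q + 1) ≠ 1) :
    InjOn (mobius Q β γ) {y | y ^ (Q + 1) = 1} := by
  intro y₁ (h₁ : y₁ ^ (Q + 1) = 1) y₂ (h₂ : y₂ ^ (Q + 1) = 1) h
  rw [mobius, mobius, div_eq_div_iff (mul_sub_ne_zero hγ hβ h₁) (mul_sub_ne_zero hγ hβ h₂)] at h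
  have hβ0 : β ≠ 0 := (IsUnit.of_pow_eq_one hβ Q.succ_ne_zero).ne_zero
  have hdet : β * (γ ^ (Q + 1) - 1) ≠ 0 := mul_ne_zero hβ0 (sub_ne_zero.mpr hγ)
  have : β * (γ ^ (Q + 1) - 1) * (y₁ - y₂) = 0 := by linear_combination h
  exact sub_eq_zero.mp ((mul_eq_zero.mp this).resolve_left hdet)

theorem sub_pow_sub_mul_pow_ne_zero (hfrob : ∀ a b : F, (a - b) ^ Q = a ^ Q - b ^ Q)
    (hγQ : (γ ^ Q) ^ Q = γ) (hβ : β ^ (Q + 1) = 1) (hγ : γ ^ (Q + 1) ≠ 1) (hy : y ^ (Q + 1) = 1) :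
    (γ * y - β) ^ n - γ * (y - γ ^ Q * β) ^ n ≠ 0 := by
  have hz : (mobius Q β γ y ^ n) ^ (Q + 1) = 1 :=
    mapsTo_pow_setOf_pow_eq_one _ _ (mapsTo_mobius hfrob hγQ hβ hγ hy)
  have hγz := mul_sub_ne_zero hγ (one_pow _) hz
  intro h
  apply hγz
  rw [mobius, div_pow, mul_div_assoc', div_sub_one (pow_ne_zero _ (mul_sub_ne_zero hγ hβ hy)),
    div_eq_zero_iff]
  exact Or.inl (by linear_combination -h)

theorem pow_mul_pow_sub_one_eq (hfrob : ∀ a b : F, (a - b) ^ Q = a ^ Q - b ^ Q)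
    (hγQ : (γ ^ Q) ^ Q = γ) (hβ : β ^ (Q + 1) = 1) (hγ : γ ^ (Q + 1) ≠ 1) (hy : y ^ (Q + 1) = 1) :
    y ^ n * ((γ * y - β) ^ n - γ * (y - γ ^ Q * β) ^ n) ^ (Q - 1) =
      -(-1) ^ n / β ^ n * mobius Q 1 γ (mobius Q β γ y ^ n) := by
  have hQ : Q ≠ 0 := by rintro rfl; simpa using hfrob 0 0
  have hβ0 : β ≠ 0 := (IsUnit.of_pow_eq_one hβ Q.succ_ne_zero).ne_zero
  have hA := mul_sub_ne_zero hγ hβ hy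
  have hg := sub_pow_sub_mul_pow_ne_zero (n := n) hfrob hγQ hβ hγ hy
  have hpow : ((γ * y - β) ^ n - γ * (y - γ ^ Q * β) ^ n) ^ (Q - 1) *
      ((γ * y - β) ^ n - γ * (y - γ ^ Q * β) ^ n) =
        ((γ * y - β) ^ n - γ * (y - γ ^ Q * β) ^ n) ^ Q := by
    rw [← pow_succ, Nat.sub_add_cancel (Nat.one_le_iff_ne_zero.mpr hQ)]
  apply mul_right_cancel₀ (mul_ne_zero (pow_ne_zero n hβ0) hg)
  calc _ = ((γ * y - β) ^ n - γ * (y - γ ^ Q * β) ^ n) ^ Q * (β * y) ^ n := by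
        rw [mul_pow, ← hpow]; ring
    _ = (-1) ^ n * ((y - γ ^ Q * β) ^ n - γ ^ Q * (γ * y - β) ^ n) :=
        sub_pow_mul_pow_eq hfrob hγQ hβ hy
    _ = _ := by
        have hAn := pow_ne_zero n hA
        rw [mobius, mobius, div_pow]
        generalize (γ * y - β) ^ n = a at hAn hg ⊢
        generalize (y - γ ^ Q * β) ^ n = b at hg ⊢
        -- the denominator `γ b - a`, in the normal form `field_simp` looks for
        have hg' : b * γ - a ≠ 0 := fun h => hg (by linear_combination -h)
        field_simp
        ring

theorem injOn_pow_mul_pow_sub_one_iff [Finite F]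
    (hfrob : ∀ a b : F, (a - b) ^ Q = a ^ Q - b ^ Q) (hγQ : (γ ^ Q) ^ Q = γ)
    (hβ : β ^ (Q + 1) = 1) (hγ : γ ^ (Q + 1) ≠ 1) :
    InjOn (fun y => y ^ n * ((γ * y - β) ^ n - γ * (y - γ ^ Q * β) ^ n) ^ (Q - 1))
        {y | y ^ (Q + 1) = 1} ↔ InjOn (· ^ n) {y : F | y ^ (Q + 1) = 1} := by
  have hβ0 : β ≠ 0 := (IsUnit.of_pow_eq_one hβ Q.succ_ne_zero).ne_zero
  have hT : BijOn (mobius Q β γ) {y | y ^ (Q + 1) = 1} {y | y ^ (Q + 1) = 1} :=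
    ((toFinite _).injOn_iff_bijOn_of_mapsTo (mapsTo_mobius hfrob hγQ hβ hγ)).mp
      (injOn_mobius hβ hγ)
  have hM : InjOn (fun z => -(-1) ^ n / β ^ n * mobius Q 1 γ z) {y : F | y ^ (Q + 1) = 1} :=
    fun z₁ h₁ z₂ h₂ h => injOn_mobius (one_pow _) hγ h₁ h₂ <|
      mul_left_cancel₀ (by simp [hβ0]) h
  have hφ : EqOn (fun y => y ^ n * ((γ * y - β) ^ n - γ * (y - γ ^ Q * β) ^ n) ^ (Q - 1))
      ((fun z => -(-1) ^ n / β ^ n * mobius Q 1 γ z) ∘ (· ^ n) ∘ mobius Q β γ)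
      {y | y ^ (Q + 1) = 1} :=
    fun y hy => pow_mul_pow_sub_one_eq hfrob hγQ hβ hγ hy
  rw [hφ.injOn_iff]
  refine ⟨fun h => ?_, fun h => hM.comp (h.comp hT.injOn hT.mapsTo)
    ((mapsTo_pow_setOf_pow_eq_one _ _).comp hT.mapsTo)⟩
  rw [← hT.image_eq]
  exact h.of_comp.image_of_comp

end Twisted

theorem stmt_5_general (p e Q : ℕ) (hp : p.Prime) (hQ : Q = p ^ e)
    (F : Type*) [Field F] [Fintype F] (hF : Fintype.card F = Q ^ 2)
    (n k : ℕ) (hn : 0 < n)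
    (β γ : F) (hβ : β ^ (Q + 1) = 1) (hγ : γ ^ (Q + 1) ≠ 1) :
    Function.Bijective (fun x : F => x ^ (n + k * (Q + 1)) *
        ((γ * x ^ (Q - 1) - β) ^ n - γ * (x ^ (Q - 1) - γ ^ Q * β) ^ n)) ↔
      (Nat.gcd (n + 2 * k) (Q - 1) = 1 ∧ Nat.gcd n (Q + 1) = 1) := by
  have hQ1 : 1 ≤ Q := hQ ▸ Nat.one_le_pow _ _ hp.pos
  have := Fact.mk hp
  have : CharP F p := charP_of_card_eq_prime_pow (f := e * 2) (by rw [hF, hQ, ← pow_mul])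
  have hfrob : ∀ a b : F, (a - b) ^ Q = a ^ Q - b ^ Q := fun a b => hQ ▸ sub_pow_char_pow a b e
  have hγQ : (γ ^ Q) ^ Q = γ := by rw [← pow_mul, ← sq, ← hF, FiniteField.pow_card]
  have hsd : (Q - 1) * (Q + 1) = Fintype.card F - 1 := by
    rw [hF]
    zify [hQ1, Nat.one_le_pow 2 Q hQ1]
    ring
  rw [FiniteField.bijective_pow_mul_comp_pow_iff
    (h := fun y => (γ * y - β) ^ n - γ * (y - γ ^ Q * β) ^ n) (by omega) hsd
    fun y hy => sub_pow_sub_mul_pow_ne_zero hfrob hγQ hβ hγ hy]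
  have hgcd : (n + k * (Q + 1)).Coprime (Q - 1) ↔ (n + 2 * k).Coprime (Q - 1) := by
    rw [show n + k * (Q + 1) = n + 2 * k + k * (Q - 1) by zify [hQ1]; ring,
      Nat.coprime_add_mul_right_left]
  have hφ : EqOn
      (fun y : F => y ^ (n + k * (Q + 1)) * ((γ * y - β) ^ n - γ * (y - γ ^ Q * β) ^ n) ^ (Q - 1))
      (fun y => y ^ n * ((γ * y - β) ^ n - γ * (y - γ ^ Q * β) ^ n) ^ (Q - 1))
      {y | y ^ (Q + 1) = 1} :=
    fun y (hy : y ^ (Q + 1) = 1) => by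
      dsimp only
      rw [pow_add, mul_comm k, pow_mul, hy, one_pow, mul_one]
  rw [hgcd, hφ.injOn_iff, injOn_pow_mul_pow_sub_one_iff hfrob hγQ hβ hγ,
    FiniteField.injOn_pow_iff_coprime (Dvd.intro_left _ hsd)]

theorem stmt_5 (p e Q : ℕ) (hp : p.Prime) (he : 0 < e) (hQ : Q = p ^ e)
    (F : Type*) [Field F] [Fintype F] (hF : Fintype.card F = Q ^ 2)
    (n k : ℕ) (hn : 0 < n)
    (β γ : F) (hβ : β ^ (Q + 1) = 1) (hγ : γ ^ (Q + 1) ≠ 1) :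
    Function.Bijective (fun x : F => x ^ (n + k * (Q + 1)) *
        ((γ * x ^ (Q - 1) - β) ^ n - γ * (x ^ (Q - 1) - γ ^ Q * β) ^ n)) ↔
      (Nat.gcd (n + 2 * k) (Q - 1) = 1 ∧ Nat.gcd n (Q + 1) = 1) :=
  stmt_5_general p e Q hp hQ F hF n k hn β γ hβ hγ
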